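/- arXiv:1808.08596 — 3 statements merged into one kernel-verified Lean document; each statement's English description precedes it below -/
import Mathlib

section
/- If ⟨r_α : α < 𝔟⟩ is an unbounded family in ω^ω (no single function eventually dominates all r_α), then VWCG_𝔟 holds: there is a sequence ⟨ℒ_δ : δ ∈ ω₁ ∩ Lim⟩ such that each ℒ_δ is a family of at most 𝔟 many cofinal subsets of δ of order type ω, and for every club C ⊆ ω₁ there exist δ and L ∈ ℒ_δ with L ∩ C infinite. -/
noncomputable section
open Set

/-- The first uncountable ordinal. -/
def omega1 : Ordinal := (Cardinal.aleph 1).ord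

/-- `δ` is a limit point of `D`. -/
def IsLimitPoint (D : Set Ordinal) (δ : Ordinal) : Prop :=
  0 < δ ∧ ∀ β < δ, ∃ ξ ∈ D, β < ξ ∧ ξ < δ

/-- `D` is a club subset of `ω₁`. -/
def IsClub' (D : Set Ordinal) : Prop :=
  (∀ ξ ∈ D, ξ < omega1) ∧ (∀ β < omega1, ∃ ξ ∈ D, β < ξ) ∧
    (∀ δ < omega1, IsLimitPoint D δ → δ ∈ D)

/-- `X` measures `Y` (both of supremum `δ`). -/
def Measures (X Y : Set Ordinal) (δ : Ordinal) : Prop :=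
  ∃ β < δ, ({ξ ∈ X | β ≤ ξ} ⊆ Y ∨ ∀ ξ ∈ X, β ≤ ξ → ξ ∉ Y)

/-- `c` is a closed cofinal subset of the limit ordinal `α`. -/
def IsClosedCofinalIn (c : Set Ordinal) (α : Ordinal) : Prop :=
  (∀ ξ ∈ c, ξ < α) ∧ (∀ β < α, ∃ ξ ∈ c, β < ξ) ∧
    (∀ γ < α, IsLimitPoint c γ → γ ∈ c)

/-- A set of ordinals has order type `ω`. -/
def HasOrderTypeOmega (L : Set Ordinal) : Prop :=
  L.Infinite ∧ ∀ γ ∈ L, (L ∩ Set.Iio γ).Finite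

/-- g eventually dominates f. -/
def EvDominates (g f : ℕ → ℕ) : Prop := ∃ m, ∀ n > m, f n < g n

/-- An unbounded family in ω^ω. -/
def IsUnboundedFamily (B : Set (ℕ → ℕ)) : Prop := ¬ ∃ g, ∀ f ∈ B, EvDominates g f

/-- The bounding number 𝔟. -/
noncomputable def boundingNumber : Cardinal.{0} :=
  sInf {c | ∃ B : Set (ℕ → ℕ), IsUnboundedFamily B ∧ Cardinal.mk B = c}

/-! Fix for each countable limit `δ` an enumeration `E` of `δ` and the ladder `ℓ` it induces
(`ℓ (n + 1)` lies above `ℓ n` and `E n`). Any `s : ℕ → ℕ` gives a set of order type `ω`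
cofinal in `δ`: the ladder together with the points `E i`, `i < s n`, lying above `ℓ n`.
Given a club `C`, choose a countable limit point `δ` of `C` and let `g n` exceed the
`E`-index of some point of `C` above `ℓ n`. As the family is unbounded, some `r α` is at
least `g` infinitely often, and at each such `n` the set built from `r α` catches a point of
`C` above `ℓ n`. -/

open Filter

lemma omega1_eq_omega_one : omega1 = Ordinal.omega 1 := Cardinal.ord_aleph 1

lemma countable_Iio_of_lt_omega1 {δ : Ordinal} (hδ : δ < omega1) : (Iio δ).Countable := by
  rw [← Cardinal.le_aleph0_iff_set_countable, Cardinal.mk_Iio_ordinal, Cardinal.lift_le_aleph0,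
    ← Order.lt_succ_iff, Cardinal.succ_aleph0, ← Cardinal.lt_ord]
  exact hδ

open Classical in
def enumIio (δ : Ordinal) : ℕ → Ordinal :=
  if h : ∃ E : ℕ → Ordinal, range E = Iio δ then h.choose else fun _ => 0

lemma range_enumIio {δ : Ordinal} (hδ : δ < omega1) (h0 : 0 < δ) :
    range (enumIio δ) = Iio δ := by
  have h : ∃ E : ℕ → Ordinal, range E = Iio δ :=
    let ⟨E, hE⟩ := (countable_Iio_of_lt_omega1 hδ).exists_eq_range ⟨0, h0⟩; ⟨E, hE.symm⟩
  rw [enumIio, dif_pos h]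
  exact h.choose_spec

lemma IsLimitPoint.isSuccLimit {D : Set Ordinal} {δ : Ordinal} (h : IsLimitPoint D δ) :
    Order.IsSuccLimit δ :=
  Ordinal.isSuccLimit_iff.mpr ⟨h.1.ne', fun β ⟨hβ, hcov⟩ =>
    let ⟨_, _, hβξ, hξδ⟩ := h.2 β hβ; hcov hβξ hξδ⟩

lemma IsLimitPoint.infinite {D : Set Ordinal} {δ : Ordinal} (h : IsLimitPoint D δ) :
    D.Infinite := by
  have : Nonempty (Iio δ) := ⟨⟨0, h.1⟩⟩
  have hpre : (Subtype.val ⁻¹' D : Set (Iio δ)).Infinite :=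
    infinite_of_forall_exists_gt fun β =>
      let ⟨ξ, hξD, hβξ, hξδ⟩ := h.2 β β.2; ⟨⟨ξ, hξδ⟩, hξD, hβξ⟩
  exact (hpre.image Subtype.val_injective.injOn).mono (image_preimage_subset _ _)

lemma exists_isLimitPoint_lt_omega1 {C : Set Ordinal} (hC : ∀ ξ ∈ C, ξ < omega1)
    (hunb : ∀ β < omega1, ∃ ξ ∈ C, β < ξ) : ∃ δ < omega1, IsLimitPoint C δ := by
  rw [omega1_eq_omega_one] at hC hunb ⊢
  have : Nonempty C := let ⟨ξ, hξ, _⟩ := hunb 0 (Ordinal.omega_pos 1); ⟨⟨ξ, hξ⟩⟩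
  have : NoMaxOrder C := ⟨fun ξ => let ⟨η, hη, hξη⟩ := hunb ξ (hC ξ ξ.2); ⟨⟨η, hη⟩, hξη⟩⟩
  obtain ⟨c, hc⟩ := Nat.exists_strictMono C
  have hbdd : BddAbove (range fun n => (c n : Ordinal)) := Ordinal.bddAbove_of_small
  have hlt : ∀ n, (c n : Ordinal) < ⨆ n, (c n : Ordinal) := fun n =>
    (Subtype.coe_lt_coe.mpr (hc n.lt_succ_self)).trans_le (le_ciSup hbdd _)
  refine ⟨⨆ n, (c n : Ordinal), Ordinal.iSup_lt_omega_one fun n => hC _ (c n).2,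
    zero_le.trans_lt (hlt 0), fun β hβ => ?_⟩
  obtain ⟨n, hn⟩ := (lt_ciSup_iff hbdd).mp hβ
  exact ⟨c n, (c n).2, hn, hlt n⟩

lemma IsUnboundedFamily.exists_frequently_le {B : Set (ℕ → ℕ)} (hB : IsUnboundedFamily B)
    (g : ℕ → ℕ) : ∃ f ∈ B, ∃ᶠ n in atTop, g n ≤ f n := by
  by_contra! h
  refine hB ⟨g, fun f hf => ?_⟩
  obtain ⟨m, hm⟩ := eventually_atTop.mp (h f hf)
  exact ⟨m, fun n hn => hm n hn.le⟩

def ladder (E : ℕ → Ordinal) : ℕ → Ordinal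
  | 0 => 0
  | n + 1 => Order.succ (max (ladder E n) (E n))

lemma ladder_strictMono (E : ℕ → Ordinal) : StrictMono (ladder E) :=
  strictMono_nat_of_lt_succ fun _ => (le_max_left _ _).trans_lt (Order.lt_succ _)

lemma lt_ladder_succ (E : ℕ → Ordinal) (n : ℕ) : E n < ladder E (n + 1) :=
  (le_max_right _ _).trans_lt (Order.lt_succ _)

section Ladder

variable {E : ℕ → Ordinal} {δ : Ordinal}

lemma ladder_lt (hδ : Order.IsSuccLimit δ) (hE : range E ⊆ Iio δ) : ∀ n, ladder E n < δ
  | 0 => hδ.bot_lt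
  | n + 1 => hδ.succ_lt (max_lt (ladder_lt hδ hE n) (hE (mem_range_self n)))

lemma exists_lt_ladder (hE : Iio δ ⊆ range E) {β : Ordinal} (hβ : β < δ) :
    ∃ n, β < ladder E n :=
  let ⟨n, hn⟩ := hE hβ; ⟨n + 1, hn ▸ lt_ladder_succ E n⟩

end Ladder

def guessSet (E : ℕ → Ordinal) (s : ℕ → ℕ) : Set Ordinal :=
  range (ladder E) ∪ ⋃ n, E '' Iio (s n) ∩ Ici (ladder E n)

section GuessSet

variable {E : ℕ → Ordinal} {δ : Ordinal} {s : ℕ → ℕ}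

lemma guessSet_subset_Iio (hδ : Order.IsSuccLimit δ) (hE : range E ⊆ Iio δ) :
    guessSet E s ⊆ Iio δ := by
  rintro _ (⟨n, rfl⟩ | hξ)
  · exact ladder_lt hδ hE n
  · obtain ⟨n, ⟨i, -, rfl⟩, -⟩ := mem_iUnion.mp hξ
    exact hE (mem_range_self i)

lemma finite_guessSet_inter_Iio_ladder (E : ℕ → Ordinal) (s : ℕ → ℕ) (N : ℕ) :
    (guessSet E s ∩ Iio (ladder E N)).Finite := by
  refine (((finite_Iio N).image (ladder E)).union
    ((finite_Iio N).biUnion fun n _ => (finite_Iio (s n)).image E)).subset ?_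
  rintro _ ⟨⟨n, rfl⟩ | hξ, hξN⟩
  · exact Or.inl ⟨n, (ladder_strictMono E).lt_iff_lt.mp hξN, rfl⟩
  · obtain ⟨n, hξs, hnξ⟩ := mem_iUnion.mp hξ
    exact Or.inr (mem_biUnion ((ladder_strictMono E).lt_iff_lt.mp (lt_of_le_of_lt hnξ hξN)) hξs)

lemma hasOrderTypeOmega_guessSet (hδ : Order.IsSuccLimit δ) (hE : range E = Iio δ) :
    HasOrderTypeOmega (guessSet E s) := by
  refine ⟨(infinite_range_of_injective (ladder_strictMono E).injective).mono
    subset_union_left, fun γ hγ => ?_⟩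
  obtain ⟨N, hN⟩ := exists_lt_ladder hE.ge (guessSet_subset_Iio hδ hE.le hγ)
  exact (finite_guessSet_inter_Iio_ladder E s N).subset
    (inter_subset_inter_right _ (Iio_subset_Iio hN.le))

lemma exists_gt_mem_guessSet (hE : Iio δ ⊆ range E) {β : Ordinal} (hβ : β < δ) :
    ∃ ξ ∈ guessSet E s, β < ξ :=
  let ⟨n, hn⟩ := exists_lt_ladder hE hβ; ⟨ladder E n, Or.inl (mem_range_self n), hn⟩

lemma exists_isLimitPoint_guessSet_inter {X : Set Ordinal} (hX : IsLimitPoint X δ)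
    (hE : range E = Iio δ) : ∃ g : ℕ → ℕ, ∀ s : ℕ → ℕ, (∃ᶠ n in atTop, g n ≤ s n) →
      IsLimitPoint (guessSet E s ∩ X) δ := by
  have hδ := hX.isSuccLimit
  choose x hxX hx_gt hxδ using fun n => hX.2 _ (ladder_lt hδ hE.le n)
  choose i hi using fun n => hE.ge (hxδ n)
  refine ⟨fun n => i n + 1, fun s hs => ⟨hX.1, fun β hβ => ?_⟩⟩
  obtain ⟨m, hm⟩ := exists_lt_ladder hE.ge hβ
  obtain ⟨n, hmn, hn⟩ := (frequently_atTop.mp hs) m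
  refine ⟨x n, ⟨Or.inr (mem_iUnion.mpr ⟨n, ⟨i n, hn, hi n⟩, (hx_gt n).le⟩), hxX n⟩,
    (hm.trans_le ((ladder_strictMono E).monotone hmn)).trans (hx_gt n), hxδ n⟩

end GuessSet

/-- From an unbounded family of size 𝔟 one gets a very weak club guessing
sequence with at most 𝔟 many guessing sets at each level. -/
theorem vwcg_b_of_unbounded_family (ι : Type) (hι : Cardinal.mk ι = boundingNumber)
    (r : ι → ℕ → ℕ) (hr : IsUnboundedFamily (Set.range r)) :
    ∃ ℒ : Ordinal → Set (Set Ordinal),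
      (∀ δ, δ < omega1 → Order.IsSuccLimit δ →
        Cardinal.mk (ℒ δ) ≤ Cardinal.lift.{1,0} boundingNumber ∧
        ∀ L ∈ ℒ δ, (∀ ξ ∈ L, ξ < δ) ∧ (∀ β < δ, ∃ ξ ∈ L, β < ξ) ∧ HasOrderTypeOmega L) ∧
      ∀ C : Set Ordinal, IsClub' C →
        ∃ δ, δ < omega1 ∧ Order.IsSuccLimit δ ∧ ∃ L ∈ ℒ δ, (L ∩ C).Infinite := by
  refine ⟨fun δ => range fun α => guessSet (enumIio δ) (r α), fun δ hδ hlim => ⟨?_, ?_⟩,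
    fun C hC => ?_⟩
  · simpa [hι] using Cardinal.mk_range_le_lift (f := fun α => guessSet (enumIio δ) (r α))
  · rintro _ ⟨α, rfl⟩
    have hE := range_enumIio hδ hlim.bot_lt
    exact ⟨guessSet_subset_Iio hlim hE.le, fun β => exists_gt_mem_guessSet hE.ge,
      hasOrderTypeOmega_guessSet hlim hE⟩
  · obtain ⟨δ, hδ, hC⟩ := exists_isLimitPoint_lt_omega1 hC.1 hC.2.1
    obtain ⟨g, hg⟩ := exists_isLimitPoint_guessSet_inter hC (range_enumIio hδ hC.1)
    obtain ⟨_, ⟨α, rfl⟩, hα⟩ := hr.exists_frequently_le g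
    exact ⟨δ, hδ, hC.isSuccLimit, _, ⟨α, rfl⟩, (hg _ hα).infinite⟩
end
end

section
/- (ZF + 𝒞_{ω₁} is a normal filter) If 𝒞_{ω₁} is an ultrafilter on ω₁, then for every sequence ⟨X_α : α ∈ ω₁ ∩ Lim⟩ with X_α ⊆ α for each α, there is a club C ⊆ ω₁ such that either C ∩ δ ⊆ X_δ for every δ ∈ C, or C ∩ X_δ = ∅ for every δ ∈ C. -/
noncomputable section
open Set

/-- `D` is a club subset of `ω₁`. -/
def IsClubOmega1 (D : Set Ordinal) : Prop :=
  (∀ ξ ∈ D, ξ < omega1) ∧ (∀ β < omega1, ∃ ξ ∈ D, β < ξ) ∧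
    (∀ δ < omega1, IsLimitPoint D δ → δ ∈ D)

/-- X belongs to the club filter on ω₁. -/
def InClubFilter (X : Set Ordinal) : Prop := ∃ C, IsClubOmega1 C ∧ C ⊆ X

/-- S is a stationary subset of ω₁. -/
def IsStationaryOmega1 (S : Set Ordinal) : Prop := ∀ C, IsClubOmega1 C → (S ∩ C).Nonempty

/-- The diagonal intersection of an ω₁-sequence of sets. -/
def DiagInter (W : Ordinal → Set Ordinal) : Set Ordinal :=
  {δ | δ < omega1 ∧ ∀ α < δ, δ ∈ W α}

/-- The club filter is normal (closed under diagonal intersections). -/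
def ClubFilterNormal : Prop :=
  ∀ W : Ordinal.{0} → Set Ordinal.{0}, (∀ α, α < omega1 → InClubFilter (W α)) →
    InClubFilter (DiagInter W)

/-- The club filter is an ultrafilter on ω₁. -/
def ClubFilterUltra : Prop :=
  ∀ X : Set Ordinal.{0}, X ⊆ Set.Iio omega1 →
    InClubFilter X ∨ InClubFilter (Set.Iio omega1 \ X)

/-!
By the ultrafilter property, for each `α < ω₁` the set `Y α = {δ | α ∈ X δ}` or its complement
contains a club, and normality yields a club `C₀` on which `X δ ∩ δ` is exactly the set of `α < δ`
with `Y α` in the club filter. That set `A` is itself measured by the club filter, so intersecting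
`C₀` with a club inside `A` or inside its complement gives the uniform club. The universe of the
ordinals is reduced to `0`, where the hypotheses live, by `Ordinal.lift`.
-/

universe u v

theorem one_lt_omega1 : (1 : Ordinal) < omega1 := by
  rw [omega1, Cardinal.ord_aleph]
  exact Ordinal.one_lt_omega0.trans Ordinal.omega0_lt_omega_one

theorem lift_omega1 : Ordinal.lift.{u, v} omega1 = omega1 := by
  simp only [omega1, Cardinal.ord_aleph, Ordinal.lift_omega, Ordinal.lift_one]

theorem lift_lt_omega1 {o : Ordinal.{v}} : Ordinal.lift.{u} o < omega1 ↔ o < omega1 := by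
  rw [← lift_omega1.{u, v}, Ordinal.lift_lt]

theorem IsLimitPoint.mono {C D : Set Ordinal} {δ : Ordinal} (h : IsLimitPoint C δ) (hCD : C ⊆ D) :
    IsLimitPoint D δ :=
  ⟨h.1, fun β hβ => by
    obtain ⟨ξ, hξ, hβξ, hξδ⟩ := h.2 β hβ
    exact ⟨ξ, hCD hξ, hβξ, hξδ⟩⟩

theorem IsLimitPoint.of_image_lift {C : Set Ordinal.{v}} {δ : Ordinal.{v}}
    (h : IsLimitPoint (Ordinal.lift.{u} '' C) (Ordinal.lift.{u} δ)) : IsLimitPoint C δ := by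
  refine ⟨Ordinal.lift_lt.{u}.mp (by rw [Ordinal.lift_zero]; exact h.1), fun β hβ => ?_⟩
  obtain ⟨_, ⟨ξ, hξ, rfl⟩, hβξ, hξδ⟩ := h.2 _ (Ordinal.lift_lt.mpr hβ)
  exact ⟨ξ, hξ, Ordinal.lift_lt.mp hβξ, Ordinal.lift_lt.mp hξδ⟩

theorem IsClubOmega1.image_lift {C : Set Ordinal.{v}} (hC : IsClubOmega1 C) :
    IsClubOmega1 (Ordinal.lift.{u} '' C) := by
  refine ⟨?_, fun β hβ => ?_, fun δ hδ hlim => ?_⟩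
  · rintro _ ⟨ξ, hξ, rfl⟩
    exact lift_lt_omega1.mpr (hC.1 ξ hξ)
  · rw [← lift_omega1.{u, v}] at hβ
    obtain ⟨β, hβω, rfl⟩ := Ordinal.lt_lift_iff.mp hβ
    obtain ⟨ξ, hξ, hβξ⟩ := hC.2.1 β hβω
    exact ⟨_, mem_image_of_mem _ hξ, Ordinal.lift_lt.mpr hβξ⟩
  · rw [← lift_omega1.{u, v}] at hδ
    obtain ⟨δ, hδω, rfl⟩ := Ordinal.lt_lift_iff.mp hδ
    exact mem_image_of_mem _ (hC.2.2 δ hδω hlim.of_image_lift)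

theorem IsClubOmega1.inter_Ioi {C : Set Ordinal} (hC : IsClubOmega1 C) {β : Ordinal}
    (hβ : β < omega1) : IsClubOmega1 (C ∩ Ioi β) := by
  refine ⟨fun ξ hξ => hC.1 ξ hξ.1, fun γ hγ => ?_, fun δ hδ hlim => ?_⟩
  · obtain ⟨ξ, hξ, hlt⟩ := hC.2.1 (max γ β) (max_lt hγ hβ)
    exact ⟨ξ, ⟨hξ, (le_max_right γ β).trans_lt hlt⟩, (le_max_left γ β).trans_lt hlt⟩
  · obtain ⟨ξ, hξ, -, hξδ⟩ := hlim.2 0 hlim.1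
    exact ⟨hC.2.2 δ hδ (hlim.mono inter_subset_left), hξ.2.trans hξδ⟩

theorem InClubFilter.mono {S T : Set Ordinal} (hS : InClubFilter S) (hST : S ⊆ T) :
    InClubFilter T :=
  let ⟨C, hC, hCS⟩ := hS
  ⟨C, hC, hCS.trans hST⟩

-- Above `1`, the diagonal intersection of the sequence `S, T, T, …` lies in `S ∩ T`.
theorem InClubFilter.inter (hN : ClubFilterNormal) {S T : Set Ordinal.{0}}
    (hS : InClubFilter S) (hT : InClubFilter T) : InClubFilter (S ∩ T) := by
  obtain ⟨C, hC, hCsub⟩ := hN (fun α => if α = 0 then S else T) fun α _ => by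
    split_ifs <;> assumption
  refine ⟨C ∩ Ioi 1, hC.inter_Ioi one_lt_omega1, fun δ ⟨hδC, hδ⟩ => ⟨?_, ?_⟩⟩
  · simpa using (hCsub hδC).2 0 (zero_lt_one.trans hδ)
  · simpa using (hCsub hδC).2 1 hδ

theorem exists_club_forall_mem_iff_inClubFilter (hN : ClubFilterNormal) (hU : ClubFilterUltra)
    (X : Ordinal.{0} → Set Ordinal.{0}) :
    ∃ C, IsClubOmega1 C ∧
      ∀ δ ∈ C, ∀ α < δ, (α ∈ X δ ↔ InClubFilter {δ | δ < omega1 ∧ α ∈ X δ}) := by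
  set Y : Ordinal → Set Ordinal := fun α => {δ | δ < omega1 ∧ α ∈ X δ}
  have hW : ∀ α, α < omega1 →
      InClubFilter {δ | δ < omega1 ∧ (α ∈ X δ ↔ InClubFilter (Y α))} := by
    intro α _
    by_cases hY : InClubFilter (Y α)
    · exact hY.mono fun δ hδ => ⟨hδ.1, iff_of_true hδ.2 hY⟩
    · refine ((hU (Y α) fun δ hδ => hδ.1).resolve_left hY).mono fun δ hδ => ⟨hδ.1, ?_⟩
      exact iff_of_false (fun hα => hδ.2 ⟨hδ.1, hα⟩) hY
  obtain ⟨C, hC, hCsub⟩ := hN _ hW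
  exact ⟨C, hC, fun δ hδ α hα => ((hCsub hδ).2 α hα).2⟩

def UniformlyMeasured (X : Ordinal → Set Ordinal) : Prop :=
  ∃ C : Set Ordinal, IsClubOmega1 C ∧
    ((∀ δ ∈ C, Order.IsSuccLimit δ → C ∩ Iio δ ⊆ X δ) ∨
     (∀ δ ∈ C, Order.IsSuccLimit δ → C ∩ X δ = ∅))

theorem UniformlyMeasured.of_lift {X : Ordinal.{max v u} → Set Ordinal.{max v u}}
    (h : UniformlyMeasured fun α : Ordinal.{v} => Ordinal.lift.{u} ⁻¹' X (Ordinal.lift.{u} α)) :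
    UniformlyMeasured X := by
  obtain ⟨C, hC, hcase⟩ := h
  refine ⟨_, hC.image_lift, hcase.imp (fun hin => ?_) (fun hout => ?_)⟩
  · rintro _ ⟨δ, hδ, rfl⟩ hlim _ ⟨⟨ξ, hξ, rfl⟩, hξδ⟩
    exact hin δ hδ (Ordinal.isSuccLimit_lift.mp hlim) ⟨hξ, Ordinal.lift_lt.mp hξδ⟩
  · rintro _ ⟨δ, hδ, rfl⟩ hlim
    refine eq_empty_iff_forall_notMem.mpr ?_
    rintro _ ⟨⟨ξ, hξ, rfl⟩, hξX⟩
    exact eq_empty_iff_forall_notMem.mp (hout δ hδ (Ordinal.isSuccLimit_lift.mp hlim)) ξ ⟨hξ, hξX⟩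

theorem uniformlyMeasured_of_clubFilterUltra (hN : ClubFilterNormal) (hU : ClubFilterUltra)
    {X : Ordinal.{0} → Set Ordinal.{0}}
    (hsub : ∀ α, α < omega1 → Order.IsSuccLimit α → X α ⊆ Iio α) : UniformlyMeasured X := by
  obtain ⟨C₀, hC₀, hcoh⟩ := exists_club_forall_mem_iff_inClubFilter hN hU X
  set A := {α | α < omega1 ∧ InClubFilter {δ | δ < omega1 ∧ α ∈ X δ}}
  have hC₀' : InClubFilter C₀ := ⟨C₀, hC₀, subset_rfl⟩
  rcases hU A fun α hα => hα.1 with hA | hA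
  · obtain ⟨C, hC, hCsub⟩ := hC₀'.inter hN hA
    refine ⟨C, hC, Or.inl fun δ hδ _ ξ ⟨hξ, hξδ⟩ => ?_⟩
    exact (hcoh δ (hCsub hδ).1 ξ hξδ).mpr (hCsub hξ).2.2
  · obtain ⟨C, hC, hCsub⟩ := hC₀'.inter hN hA
    refine ⟨C, hC, Or.inr fun δ hδ hlim => eq_empty_iff_forall_notMem.mpr ?_⟩
    rintro ξ ⟨hξ, hξX⟩
    have hξδ : ξ < δ := hsub δ (hC.1 δ hδ) hlim hξX
    exact (hCsub hξ).2.2 ⟨hC.1 ξ hξ, (hcoh δ (hCsub hδ).1 ξ hξδ).mp hξX⟩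

/-- (ZF + normality) If the club filter is an ultrafilter, then every sequence
⟨X_α : α limit⟩ with X_α ⊆ α is uniformly measured by a single club. -/
theorem uniform_measuring_of_ultra (hN : ClubFilterNormal) (hU : ClubFilterUltra)
    (X : Ordinal → Set Ordinal)
    (hsub : ∀ α, α < omega1 → Order.IsSuccLimit α → X α ⊆ Set.Iio α) :
    ∃ C : Set Ordinal, IsClubOmega1 C ∧
      ((∀ δ ∈ C, Order.IsSuccLimit δ → C ∩ Set.Iio δ ⊆ X δ) ∨
       (∀ δ ∈ C, Order.IsSuccLimit δ → C ∩ X δ = ∅)) := by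
  refine UniformlyMeasured.of_lift.{u_1, 0} (uniformlyMeasured_of_clubFilterUltra hN hU ?_)
  intro α hα hlim β hβ
  exact Ordinal.lift_lt.mp (hsub _ (lift_lt_omega1.mpr hα) (Ordinal.isSuccLimit_lift.mpr hlim) hβ)
end
end

section
/- In the poset ℙ of Proposition 3.1 (conditions (x,a) with x ∈ M open bounded in δ, a ∈ [𝒴]^{<ω}, ordered by end-extension with y \ x ⊆ ⋂a), for every club C ⊆ ω₁ with C ∈ M, the set E_C = {(x,a) ∈ ℙ : x ∩ C ≠ ∅} is dense in ℙ. -/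
noncomputable section
open Set

/-- `D` is a club subset of `ω₁`. -/
def IsClubω₁ (D : Set Ordinal) : Prop :=
  (∀ ξ ∈ D, ξ < omega1) ∧ (∀ β < omega1, ∃ ξ ∈ D, β < ξ) ∧
    (∀ δ < omega1, IsLimitPoint D δ → δ ∈ D)

/-- z is M-stationary: it meets every club of ω₁ belonging to M
(here MSets is the collection of subsets of ω₁ that belong to M). -/
def MStat (MSets : Set (Set Ordinal)) (z : Set Ordinal) : Prop :=
  ∀ C ∈ MSets, IsClubω₁ C → (z ∩ C).Nonempty

/-- A set of ordinals is open in the order topology. -/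
def IsOpenSub (x : Set Ordinal) : Prop :=
  ∀ ξ ∈ x, ξ = 0 ∨ ∃ β < ξ, Set.Ioc β ξ ⊆ x

/-- A condition of the poset ℙ of Proposition 3.1: a pair (x, a) where x ∈ M is
an open bounded subset of δ = M ∩ ω₁ and a is a finite subset of 𝒴. -/
structure Cond (MSets 𝒴 : Set (Set Ordinal)) (δ : Ordinal) where
  x : Set Ordinal
  a : Set (Set Ordinal)
  x_mem : x ∈ MSets
  x_open : IsOpenSub x
  x_sub : ∀ ξ ∈ x, ξ < δ
  x_bdd : ∃ β < δ, ∀ ξ ∈ x, ξ < β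
  a_fin : a.Finite
  a_sub : a ⊆ 𝒴

/-- The order on ℙ: (y, b) ≤ (x, a) iff y end-extends x, a ⊆ b, and y \ x ⊆ ⋂ a. -/
def Cond.le {MSets 𝒴 : Set (Set Ordinal)} {δ : Ordinal}
    (q p : Cond MSets 𝒴 δ) : Prop :=
  p.x ⊆ q.x ∧ (∀ ξ ∈ q.x, ξ ∉ p.x → ∀ η ∈ p.x, η < ξ) ∧
    p.a ⊆ q.a ∧ (q.x \ p.x ⊆ ⋂₀ p.a)

/-! If every point of `x` lies below `β₀ < δ`, the limit points of `C` above `β₀` form a club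
in `M`, so some such limit point `α` lies in the `M`-stationary set `⋂ a`. Since `⋂ a` is open,
it contains an interval `(β, α]` with `β₀ ≤ β`, and as `α` is a limit point of `C` the interval
`(β, α)` meets `C`; hence `(x ∪ (β, α), a)` extends `(x, a)` into `E_C`. -/

open Filter Topology

theorem exists_isLimitPoint_gt {C : Set Ordinal} (hC_lt : ∀ ξ ∈ C, ξ < omega1)
    (hC_cof : ∀ β < omega1, ∃ ξ ∈ C, β < ξ) {β : Ordinal} (hβ : β < omega1) :
    ∃ γ < omega1, β < γ ∧ IsLimitPoint C γ := by
  choose! next hnext_mem hlt_next using hC_cof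
  have hnext_lt : ∀ ξ < omega1, next ξ < omega1 := fun ξ hξ => hC_lt _ (hnext_mem ξ hξ)
  -- `γ` is the supremum of the ω-sequence `β < next β < next (next β) < ⋯` in `C`.
  set γ := Ordinal.nfp next β
  have hγ : γ < omega1 :=
    Cardinal.nfp_lt_ord_of_isRegular Cardinal.isRegular_aleph_one
      (Cardinal.aleph0_lt_aleph_one.ne') hnext_lt hβ
  have hiter_lt : ∀ n, next^[n] β < omega1 := fun n =>
    (Ordinal.iterate_le_nfp next β n).trans_lt hγ
  have hiter_lt_succ : ∀ n, next^[n] β < next^[n + 1] β := fun n => by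
    rw [Function.iterate_succ_apply']
    exact hlt_next _ (hiter_lt n)
  have hβγ : β < γ := (hiter_lt_succ 0).trans_le (Ordinal.iterate_le_nfp next β 1)
  refine ⟨γ, hγ, hβγ, zero_le.trans_lt hβγ, fun η hη => ?_⟩
  obtain ⟨n, hn⟩ := Ordinal.lt_nfp_iff.1 hη
  refine ⟨next^[n + 1] β, ?_, hn.trans (hiter_lt_succ n), ?_⟩
  · rw [Function.iterate_succ_apply']
    exact hnext_mem _ (hiter_lt n)
  · exact (hiter_lt_succ (n + 1)).trans_le (Ordinal.iterate_le_nfp next β _)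

theorem IsClubω₁.isClubω₁_limitPoints {C : Set Ordinal} (hC : IsClubω₁ C) {β₀ : Ordinal}
    (hβ₀ : β₀ < omega1) : IsClubω₁ {γ | γ < omega1 ∧ β₀ < γ ∧ IsLimitPoint C γ} := by
  refine ⟨fun γ hγ => hγ.1, fun β hβ => ?_, fun γ hγ hlim => ?_⟩
  · obtain ⟨γ, hγ, hβγ, hlim⟩ := exists_isLimitPoint_gt hC.1 hC.2.1 (max_lt hβ hβ₀)
    exact ⟨γ, ⟨hγ, (le_max_right β β₀).trans_lt hβγ, hlim⟩, (le_max_left β β₀).trans_lt hβγ⟩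
  · obtain ⟨ξ, hξ, -, hξγ⟩ := hlim.2 0 hlim.1
    refine ⟨hγ, hξ.2.1.trans hξγ, hlim.1, fun η hη => ?_⟩
    obtain ⟨ξ, hξ, hηξ, hξγ⟩ := hlim.2 η hη
    obtain ⟨ζ, hζC, hηζ, hζξ⟩ := hξ.2.2.2 η hηξ
    exact ⟨ζ, hζC, hηζ, hζξ.trans hξγ⟩

theorem IsOpenSub.mem_nhdsLE {X : Set Ordinal} (hX : IsOpenSub X) {α : Ordinal} (hα : α ∈ X)
    (hα₀ : α ≠ 0) : X ∈ 𝓝[≤] α := by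
  obtain h | ⟨β, hβ, hsub⟩ := hX α hα
  · exact absurd h hα₀
  · exact Filter.mem_of_superset (Ioc_mem_nhdsLE hβ) hsub

theorem IsOpenSub.union {x y : Set Ordinal} (hx : IsOpenSub x) (hy : IsOpenSub y) :
    IsOpenSub (x ∪ y) := by
  rintro ξ (hξ | hξ)
  · exact (hx ξ hξ).imp_right fun ⟨β, hβ, hsub⟩ => ⟨β, hβ, hsub.trans subset_union_left⟩
  · exact (hy ξ hξ).imp_right fun ⟨β, hβ, hsub⟩ => ⟨β, hβ, hsub.trans subset_union_right⟩

theorem isOpenSub_Ioo (β γ : Ordinal) : IsOpenSub (Ioo β γ) :=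
  fun _ hξ => Or.inr ⟨β, hξ.1, fun _ hη => ⟨hη.1, hη.2.trans_lt hξ.2⟩⟩

namespace Cond

variable {MSets 𝒴 : Set (Set Ordinal)} {δ : Ordinal}

def unionIoo (p : Cond MSets 𝒴 δ) (β γ : Ordinal) (hmem : p.x ∪ Ioo β γ ∈ MSets) (hγ : γ < δ) : Cond MSets 𝒴 δ where
  x := p.x ∪ Ioo β γ
  a := p.a
  x_mem := hmem
  x_open := p.x_open.union (isOpenSub_Ioo β γ)
  x_sub := by
    rintro ξ (hξ | hξ)
    · exact p.x_sub ξ hξ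
    · exact hξ.2.trans hγ
  x_bdd := by
    obtain ⟨β₀, hβ₀, hx⟩ := p.x_bdd
    refine ⟨max β₀ γ, max_lt hβ₀ hγ, ?_⟩
    rintro ξ (hξ | hξ)
    · exact lt_max_of_lt_left (hx ξ hξ)
    · exact lt_max_of_lt_right hξ.2
  a_fin := p.a_fin
  a_sub := p.a_sub

theorem unionIoo_le (p : Cond MSets 𝒴 δ) {β γ : Ordinal} (hmem : p.x ∪ Ioo β γ ∈ MSets)
    (hxβ : ∀ η ∈ p.x, η ≤ β) (hγ : γ < δ) (hsub : Ioo β γ ⊆ ⋂₀ p.a) :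
    (p.unionIoo β γ hmem hγ).le p := by
  refine ⟨subset_union_left, ?_, subset_rfl, ?_⟩
  · rintro ξ (hξ | hξ) hξx η hη
    · exact absurd hξ hξx
    · exact (hxβ η hη).trans_lt hξ.1
  · rintro ξ ⟨hξ | hξ, hξx⟩
    · exact absurd hξ hξx
    · exact hsub hξ

end Cond

theorem E_C_dense_general (MSets 𝒴 : Set (Set Ordinal)) (δ : Ordinal)
    (hδω1 : δ < omega1)
    (h𝒴 : ∀ X ∈ 𝒴, IsOpenSub X ∧ X ⊆ Set.Iio δ)
    (hFIP : ∀ a ⊆ 𝒴, a.Finite → MStat MSets (Set.Iio δ ∩ ⋂₀ a))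
    -- elementarity-type closure properties of M:
    (hInt : ∀ β γ : Ordinal, β < δ → γ < δ → Set.Ioo β γ ∈ MSets)
    (hUnion : ∀ x ∈ MSets, ∀ y ∈ MSets, x ∪ y ∈ MSets)
    (hLimC : ∀ C ∈ MSets, IsClubω₁ C → ∀ β < δ,
      {γ | γ < omega1 ∧ β < γ ∧ IsLimitPoint C γ} ∈ MSets) :
    ∀ C ∈ MSets, IsClubω₁ C → ∀ p : Cond MSets 𝒴 δ,
      ∃ q : Cond MSets 𝒴 δ, Cond.le q p ∧ (q.x ∩ C).Nonempty := by
  intro C hCM hC p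
  obtain ⟨β₀, hβ₀δ, hxβ₀⟩ := p.x_bdd
  obtain ⟨α, ⟨hαδ, hαa⟩, -, hβ₀α, hαC⟩ := hFIP p.a p.a_sub p.a_fin _
    (hLimC C hCM hC β₀ hβ₀δ) (hC.isClubω₁_limitPoints (hβ₀δ.trans hδω1))
  have hnhds : ⋂₀ p.a ∈ 𝓝[≤] α := (Filter.sInter_mem p.a_fin).2 fun X hX =>
    (h𝒴 X (p.a_sub hX)).1.mem_nhdsLE (hαa X hX) hαC.1.ne'
  obtain ⟨β, ⟨hβ₀β, hβα⟩, hβa⟩ := (mem_nhdsLE_iff_exists_mem_Ico_Ioc_subset hβ₀α).1 hnhds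
  obtain ⟨ξ, hξC, hβξ, hξα⟩ := hαC.2 β hβα
  have hmem : p.x ∪ Ioo β α ∈ MSets :=
    hUnion _ p.x_mem _ (hInt β α (hβα.trans hαδ) hαδ)
  have hxβ : ∀ η ∈ p.x, η ≤ β := fun η hη => (hxβ₀ η hη).le.trans hβ₀β
  exact ⟨p.unionIoo β α hmem hαδ,
    p.unionIoo_le hmem hxβ hαδ (Ioo_subset_Ioc_self.trans hβa), ξ, Or.inr ⟨hβξ, hξα⟩, hξC⟩

/-- Density of E_C = {(x,a) : x ∩ C ≠ ∅} for every club C ∈ M. -/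
theorem E_C_dense (MSets 𝒴 : Set (Set Ordinal)) (δ : Ordinal)
    (hδ : Order.IsSuccLimit δ) (hδω1 : δ < omega1)
    (h𝒴 : ∀ X ∈ 𝒴, IsOpenSub X ∧ X ⊆ Set.Iio δ)
    (hFIP : ∀ a ⊆ 𝒴, a.Finite → MStat MSets (Set.Iio δ ∩ ⋂₀ a))
    -- elementarity-type closure properties of M:
    (hInt : ∀ β γ : Ordinal, β < δ → γ < δ → Set.Ioo β γ ∈ MSets)
    (hUnion : ∀ x ∈ MSets, ∀ y ∈ MSets, x ∪ y ∈ MSets)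
    (hLimC : ∀ C ∈ MSets, IsClubω₁ C → ∀ β < δ,
      {γ | γ < omega1 ∧ β < γ ∧ IsLimitPoint C γ} ∈ MSets) :
    ∀ C ∈ MSets, IsClubω₁ C → ∀ p : Cond MSets 𝒴 δ,
      ∃ q : Cond MSets 𝒴 δ, Cond.le q p ∧ (q.x ∩ C).Nonempty :=
  E_C_dense_general MSets 𝒴 δ hδω1 h𝒴 hFIP hInt hUnion hLimC
end
end
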